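/- Let A be a simple locally finite associative algebra over an algebraically closed field F and let {A_α}_{α∈Γ} be a perfect local system of A (each A_α satisfies A_α² = A_α). Then for each α ∈ Γ there exists α′ ∈ Γ such that rad(A_β) ∩ A_α = 0 for all β ≥ α′. -/

import Mathlib

/-- `B` is (the underlying submodule of) a subalgebra: closed under multiplication. -/
def IsSubalg {F A : Type*} [Field F] [NonUnitalRing A] [Module F A]
    (B : Submodule F A) : Prop :=
  ∀ x ∈ B, ∀ y ∈ B, x * y ∈ B

/-- `I` is a two-sided ideal of the subalgebra `B`. -/
def IsIdealIn {F A : Type*} [Field F] [NonUnitalRing A] [Module F A]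
    (I B : Submodule F A) : Prop :=
  I ≤ B ∧ ∀ b ∈ B, ∀ x ∈ I, b * x ∈ I ∧ x * b ∈ I

/-- Product of two submodules of a (possibly non-unital) algebra: the span of products. -/
def prodSub {F A : Type*} [Field F] [NonUnitalRing A] [Module F A]
    (M N : Submodule F A) : Submodule F A :=
  Submodule.span F {z : A | ∃ x ∈ M, ∃ y ∈ N, z = x * y}

/-- `pows B i` is the power `B^(i+1)`: `pows B 0 = B`, `pows B (i+1) = B * pows B i`. -/
def pows {F A : Type*} [Field F] [NonUnitalRing A] [Module F A]
    (B : Submodule F A) : ℕ → Submodule F A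
  | 0 => B
  | (i + 1) => prodSub B (pows B i)

/-- A family of finite-dimensional subalgebras is a local system: union is everything
and the family is directed under inclusion. -/
def IsLocalSystem {F A : Type*} [Field F] [NonUnitalRing A] [Module F A] {Γ : Type*}
    (S : Γ → Submodule F A) : Prop :=
  (∀ α, IsSubalg (S α)) ∧ (∀ α, FiniteDimensional F (S α)) ∧
    (∀ x : A, ∃ α, x ∈ S α) ∧ ∀ α β, ∃ γ, S α ≤ S γ ∧ S β ≤ S γ

/-- Every finite subset is contained in a finite-dimensional subalgebra. -/
def IsLocallyFinite (F A : Type*) [Field F] [NonUnitalRing A] [Module F A] : Prop :=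
  ∀ s : Finset A, ∃ B : Submodule F A, IsSubalg B ∧ FiniteDimensional F B ∧ ∀ x ∈ s, x ∈ B

/-- A (possibly non-unital) algebra is simple: `A² ≠ 0` and no nontrivial two-sided ideals. -/
def IsSimpleAlg (F A : Type*) [Field F] [NonUnitalRing A] [Module F A] : Prop :=
  (∃ x y : A, x * y ≠ 0) ∧ ∀ I : Submodule F A, IsIdealIn I ⊤ → I = ⊥ ∨ I = ⊤

/-- `R` is the radical of the finite-dimensional algebra `B`: its largest nilpotent ideal
(which coincides with the Jacobson radical for finite-dimensional algebras). -/
def IsRadicalOf {F A : Type*} [Field F] [NonUnitalRing A] [Module F A]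
    (R B : Submodule F A) : Prop :=
  IsIdealIn R B ∧ (∃ n, pows R n = ⊥) ∧
    ∀ I, IsIdealIn I B → (∃ n, pows I n = ⊥) → I ≤ R

/-- `I` is an ideal of codimension 1 in `B`. -/
def CodimOneIn {F A : Type*} [Field F] [NonUnitalRing A] [Module F A]
    (I B : Submodule F A) : Prop :=
  I ≤ B ∧ I ≠ B ∧ ∃ v : A, B ≤ I ⊔ Submodule.span F {v}

/-- The algebra `B` is 1-perfect: it has no two-sided ideal of codimension 1. -/
def Is1Perfect {F A : Type*} [Field F] [NonUnitalRing A] [Module F A]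
    (B : Submodule F A) : Prop :=
  ¬ ∃ I : Submodule F A, IsIdealIn I B ∧ CodimOneIn I B

/-- `Q` is the largest 1-perfect ideal (the 1-perfect radical) of the algebra `B`. -/
def IsLargest1PerfectIdealIn {F A : Type*} [Field F] [NonUnitalRing A] [Module F A]
    (Q B : Submodule F A) : Prop :=
  IsIdealIn Q B ∧ Is1Perfect Q ∧ ∀ I, IsIdealIn I B → Is1Perfect I → I ≤ Q

/-- `B` is a simple subalgebra: nonzero products and no nontrivial ideals of itself. -/
def IsSimpleSubalg {F A : Type*} [Field F] [NonUnitalRing A] [Module F A]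
    (B : Submodule F A) : Prop :=
  (∃ x ∈ B, ∃ y ∈ B, x * y ≠ 0) ∧ ∀ I : Submodule F A, IsIdealIn I B → I = ⊥ ∨ I = B

/-!
Fix `α` and pick `β₀` with `S α ≤ S β₀` minimising `dim (rad (S β₀) ⊓ S α)`. For `S β₀ ≤ S β`,
`rad (S β) ⊓ S β₀` is a nilpotent ideal of `S β₀`, so it lies in `rad (S β₀)`; by minimality
`rad (S β) ⊓ S α` is one and the same space `D` for all such `β`.
The ideals of the `S β` generated by `D` form a directed family whose union is an ideal of `A`,
hence `0` or `A`. In the second case the finite-dimensional `S α` lies in the ideal of some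
`S β₁ ⊇ S β₀` generated by `D`, hence in the nilpotent `rad (S β₁)`, and a perfect nilpotent
algebra is `0`. Either way `D = 0`.
-/

open Submodule Module

lemma Submodule.FG.exists_le_of_le_iSup {R M ι : Type*} [Semiring R] [AddCommMonoid M]
    [Module R M] [Nonempty ι] {N : Submodule R M} (hN : N.FG) {f : ι → Submodule R M}
    (hf : Directed (· ≤ ·) f) (h : N ≤ ⨆ i, f i) : ∃ i, N ≤ f i := by
  obtain ⟨_, ⟨i, rfl⟩, hi⟩ :=
    (CompleteLattice.isCompactElement_iff_le_of_directed_sSup_le _ N).mp ((fg_iff_compact N).mp hN)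
      (Set.range f) (Set.range_nonempty f) (directedOn_range.mpr hf) h
  exact ⟨i, hi⟩

section

variable {F A : Type*} [Field F] [NonUnitalRing A] [Module F A]

lemma mem_prodSub {M N : Submodule F A} {x y : A} (hx : x ∈ M) (hy : y ∈ N) :
    x * y ∈ prodSub M N :=
  subset_span ⟨x, hx, y, hy, rfl⟩

lemma prodSub_le_iff {M N P : Submodule F A} :
    prodSub M N ≤ P ↔ ∀ x ∈ M, ∀ y ∈ N, x * y ∈ P := by
  refine ⟨fun h x hx y hy => h (mem_prodSub hx hy), fun h => span_le.mpr ?_⟩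
  rintro _ ⟨x, hx, y, hy, rfl⟩
  exact h x hx y hy

lemma prodSub_mono {M M' N N' : Submodule F A} (hM : M ≤ M') (hN : N ≤ N') :
    prodSub M N ≤ prodSub M' N' :=
  prodSub_le_iff.mpr fun _ hx _ hy => mem_prodSub (hM hx) (hN hy)

lemma prodSub_sup_right (M N P : Submodule F A) :
    prodSub M (N ⊔ P) = prodSub M N ⊔ prodSub M P := by
  refine le_antisymm (prodSub_le_iff.mpr fun x hx y hy => ?_)
    (sup_le (prodSub_mono le_rfl le_sup_left) (prodSub_mono le_rfl le_sup_right))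
  obtain ⟨n, hn, p, hp, rfl⟩ := mem_sup.mp hy
  rw [mul_add]
  exact add_mem_sup (mem_prodSub hx hn) (mem_prodSub hx hp)

lemma prodSub_sup_left (M N P : Submodule F A) :
    prodSub (M ⊔ N) P = prodSub M P ⊔ prodSub N P := by
  refine le_antisymm (prodSub_le_iff.mpr fun x hx y hy => ?_)
    (sup_le (prodSub_mono le_sup_left le_rfl) (prodSub_mono le_sup_right le_rfl))
  obtain ⟨m, hm, n, hn, rfl⟩ := mem_sup.mp hx
  rw [add_mul]
  exact add_mem_sup (mem_prodSub hm hy) (mem_prodSub hn hy)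

lemma prodSub_eq_span_image2 (M N : Submodule F A) :
    prodSub M N = span F (Set.image2 (· * ·) M N) := by
  simp only [prodSub, Set.image2, eq_comm, SetLike.mem_coe]

lemma prodSub_le_of_isSubalg {B : Submodule F A} (hB : IsSubalg B) : prodSub B B ≤ B :=
  prodSub_le_iff.mpr hB

lemma pows_mono {B C : Submodule F A} (h : B ≤ C) : ∀ k, pows B k ≤ pows C k
  | 0 => h
  | k + 1 => prodSub_mono h (pows_mono h k)

lemma pows_le_self {B : Submodule F A} (hB : IsSubalg B) : ∀ k, pows B k ≤ B
  | 0 => le_rfl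
  | k + 1 => (prodSub_mono le_rfl (pows_le_self hB k)).trans (prodSub_le_of_isSubalg hB)

lemma pows_eq_self_of_perfect {B : Submodule F A} (h : prodSub B B = B) : ∀ k, pows B k = B
  | 0 => rfl
  | k + 1 => by rw [pows, pows_eq_self_of_perfect h k, h]

lemma eq_bot_of_perfect_of_le_nilpotent {B R : Submodule F A} {n : ℕ} (hB : prodSub B B = B)
    (hBR : B ≤ R) (hR : pows R n = ⊥) : B = ⊥ := by
  rw [← pows_eq_self_of_perfect hB n, ← le_bot_iff, ← hR]
  exact pows_mono hBR n

lemma isIdealIn_bot (B : Submodule F A) : IsIdealIn ⊥ B := by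
  refine ⟨bot_le, fun b _ x hx => ?_⟩
  rw [mem_bot] at hx
  simp [hx]

lemma IsIdealIn.sup {I J B : Submodule F A} (hI : IsIdealIn I B) (hJ : IsIdealIn J B) :
    IsIdealIn (I ⊔ J) B := by
  refine ⟨sup_le hI.1 hJ.1, fun b hb x hx => ?_⟩
  obtain ⟨y, hy, z, hz, rfl⟩ := mem_sup.mp hx
  rw [mul_add, add_mul]
  exact ⟨add_mem_sup (hI.2 b hb y hy).1 (hJ.2 b hb z hz).1,
    add_mem_sup (hI.2 b hb y hy).2 (hJ.2 b hb z hz).2⟩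

lemma IsIdealIn.inf_of_le {I B C : Submodule F A} (hI : IsIdealIn I C) (hB : IsSubalg B)
    (hBC : B ≤ C) : IsIdealIn (I ⊓ B) B :=
  ⟨inf_le_right, fun b hb x hx =>
    ⟨⟨(hI.2 b (hBC hb) x hx.1).1, hB b hb x hx.2⟩, ⟨(hI.2 b (hBC hb) x hx.1).2, hB x hx.2 b hb⟩⟩⟩

lemma IsIdealIn.prodSub_left_le {I B : Submodule F A} (hI : IsIdealIn I B) : prodSub B I ≤ I :=
  prodSub_le_iff.mpr fun b hb x hx => (hI.2 b hb x hx).1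

lemma IsIdealIn.prodSub_right_le {I B : Submodule F A} (hI : IsIdealIn I B) : prodSub I B ≤ I :=
  prodSub_le_iff.mpr fun x hx b hb => (hI.2 b hb x hx).2

lemma pows_sup_le {I N B : Submodule F A} (hB : IsSubalg B) (hI : IsIdealIn I B) (hN : N ≤ B) :
    ∀ k, pows (I ⊔ N) k ≤ I ⊔ pows N k
  | 0 => le_rfl
  | k + 1 => calc
      pows (I ⊔ N) (k + 1) ≤ prodSub (I ⊔ N) (I ⊔ pows N k) :=
        prodSub_mono le_rfl (pows_sup_le hB hI hN k)
      _ = prodSub I I ⊔ prodSub I (pows N k) ⊔ (prodSub N I ⊔ pows N (k + 1)) := by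
        rw [prodSub_sup_left, prodSub_sup_right, prodSub_sup_right, pows]
      _ ≤ I ⊔ pows N (k + 1) := by
        have hII : prodSub I I ≤ I := (prodSub_mono hI.1 le_rfl).trans hI.prodSub_left_le
        have hIN : prodSub I (pows N k) ≤ I :=
          (prodSub_mono le_rfl ((pows_mono hN k).trans (pows_le_self hB k))).trans
            hI.prodSub_right_le
        have hNI : prodSub N I ≤ I := (prodSub_mono hN le_rfl).trans hI.prodSub_left_le
        exact sup_le (le_sup_of_le_left (sup_le hII hIN))
          (sup_le (le_sup_of_le_left hNI) le_sup_right)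

def idealClosure (D B : Submodule F A) : Submodule F A :=
  D ⊔ prodSub B D ⊔ prodSub D B ⊔ prodSub (prodSub B D) B

lemma le_idealClosure (D B : Submodule F A) : D ≤ idealClosure D B :=
  le_sup_of_le_left (le_sup_of_le_left le_sup_left)

lemma idealClosure_mono {D B C : Submodule F A} (h : B ≤ C) :
    idealClosure D B ≤ idealClosure D C :=
  sup_le_sup (sup_le_sup (sup_le_sup le_rfl (prodSub_mono h le_rfl)) (prodSub_mono le_rfl h))
    (prodSub_mono (prodSub_mono h le_rfl) h)

lemma idealClosure_le {D I B : Submodule F A} (hI : IsIdealIn I B) (hD : D ≤ I) :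
    idealClosure D B ≤ I := by
  have hBD : prodSub B D ≤ I := (prodSub_mono le_rfl hD).trans hI.prodSub_left_le
  exact sup_le (sup_le (sup_le hD hBD) ((prodSub_mono hD le_rfl).trans hI.prodSub_right_le))
    ((prodSub_mono hBD le_rfl).trans hI.prodSub_right_le)

lemma IsRadicalOf.inf_le {R R₀ B C : Submodule F A} (hR : IsRadicalOf R C) (hR₀ : IsRadicalOf R₀ B)
    (hB : IsSubalg B) (hBC : B ≤ C) : R ⊓ B ≤ R₀ := by
  obtain ⟨n, hn⟩ := hR.2.1
  exact hR₀.2.2 _ (hR.1.inf_of_le hB hBC) ⟨n, le_bot_iff.mp (hn ▸ pows_mono inf_le_left n)⟩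

section ScalarTower

variable [IsScalarTower F A A] [SMulCommClass F A A]

lemma prodSub_span_span (s t : Set A) :
    prodSub (span F s) (span F t) = span F (Set.image2 (· * ·) s t) := by
  have h := map₂_span_span F (LinearMap.mul F A) s t
  rw [map₂_eq_span_image2] at h
  rw [prodSub_eq_span_image2]
  exact h

lemma prodSub_assoc (M N P : Submodule F A) :
    prodSub (prodSub M N) P = prodSub M (prodSub N P) := by
  calc prodSub (prodSub M N) P
      = prodSub (span F (Set.image2 (· * ·) M N)) (span F P) := by
        rw [prodSub_eq_span_image2 M N, span_eq]
    _ = span F (Set.image2 (· * ·) M (Set.image2 (· * ·) N P)) := by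
        rw [prodSub_span_span, Set.image2_assoc mul_assoc]
    _ = prodSub M (prodSub N P) := by
        rw [← prodSub_span_span, span_eq, ← prodSub_eq_span_image2]

lemma pows_add (B : Submodule F A) (a b : ℕ) :
    pows B (a + b + 1) = prodSub (pows B a) (pows B b) := by
  induction a with
  | zero => rw [Nat.zero_add]; rfl
  | succ a ih => rw [show a + 1 + b + 1 = a + b + 1 + 1 by omega, pows, ih, ← prodSub_assoc]; rfl

-- With `pows X i = X^(i+1)`: from `X^(n+1) ≤ I` get `X^((j+1)(n+1)) ≤ I^(j+1)`.
lemma pows_le_pows_of_pows_le {X I : Submodule F A} {n : ℕ} (h : pows X n ≤ I) :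
    ∀ j, pows X (j * (n + 1) + n) ≤ pows I j
  | 0 => by rwa [zero_mul, zero_add]
  | j + 1 => by
    rw [show (j + 1) * (n + 1) + n = n + (j * (n + 1) + n) + 1 by ring, pows_add]
    exact prodSub_mono h (pows_le_pows_of_pows_le h j)

lemma exists_pows_sup_eq_bot {I N B : Submodule F A} (hB : IsSubalg B) (hI : IsIdealIn I B)
    (hN : N ≤ B) {m n : ℕ} (hm : pows I m = ⊥) (hn : pows N n = ⊥) :
    ∃ k, pows (I ⊔ N) k = ⊥ := by
  have hle : pows (I ⊔ N) n ≤ I := by simpa only [hn, sup_bot_eq] using pows_sup_le hB hI hN n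
  exact ⟨m * (n + 1) + n, le_bot_iff.mp (hm ▸ pows_le_pows_of_pows_le hle m)⟩

-- A nilpotent ideal of maximal dimension absorbs every other one, as sums of nilpotent ideals
-- are nilpotent.
lemma exists_isRadicalOf {B : Submodule F A} [FiniteDimensional F B] (hB : IsSubalg B) :
    ∃ R, IsRadicalOf R B := by
  classical
  let P : ℕ → Prop := fun d => ∃ I, IsIdealIn I B ∧ (∃ k, pows I k = ⊥) ∧ finrank F I = d
  have hbound {I : Submodule F A} (h : I ≤ B) : finrank F I ≤ finrank F B := finrank_mono h
  obtain ⟨R, hR, hRnil, hRrank⟩ :=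
    Nat.findGreatest_spec (P := P) (hbound bot_le) ⟨⊥, isIdealIn_bot B, ⟨0, rfl⟩, rfl⟩
  refine ⟨R, hR, hRnil, fun I hI ⟨m, hm⟩ => ?_⟩
  obtain ⟨n, hn⟩ := hRnil
  have hsup := hI.sup hR
  have : FiniteDimensional F (I ⊔ R : Submodule F A) := finiteDimensional_of_le hsup.1
  have hle : finrank F (I ⊔ R : Submodule F A) ≤ finrank F R :=
    hRrank ▸ Nat.le_findGreatest (hbound hsup.1)
      ⟨_, hsup, exists_pows_sup_eq_bot hB hI hR.1 hm hn, rfl⟩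
  exact (eq_of_le_of_finrank_le le_sup_right hle) ▸ le_sup_left

lemma prodSub_idealClosure_le {D B : Submodule F A} (hB : IsSubalg B) :
    prodSub B (idealClosure D B) ≤ idealClosure D B := by
  have hBD : prodSub B (prodSub B D) ≤ prodSub B D := by
    rw [← prodSub_assoc]; exact prodSub_mono (prodSub_le_of_isSubalg hB) le_rfl
  simp only [idealClosure, prodSub_sup_right, sup_le_iff]
  refine ⟨⟨⟨?_, ?_⟩, ?_⟩, ?_⟩
  · exact le_sup_of_le_left (le_sup_of_le_left le_sup_right)
  · exact hBD.trans (le_sup_of_le_left (le_sup_of_le_left le_sup_right))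
  · rw [← prodSub_assoc]; exact le_sup_right
  · rw [← prodSub_assoc]; exact (prodSub_mono hBD le_rfl).trans le_sup_right

lemma idealClosure_prodSub_le {D B : Submodule F A} (hB : IsSubalg B) :
    prodSub (idealClosure D B) B ≤ idealClosure D B := by
  have hBB := prodSub_le_of_isSubalg hB
  simp only [idealClosure, prodSub_sup_left, sup_le_iff]
  refine ⟨⟨⟨?_, ?_⟩, ?_⟩, ?_⟩
  · exact le_sup_of_le_left le_sup_right
  · exact le_sup_right
  · rw [prodSub_assoc]; exact (prodSub_mono le_rfl hBB).trans (le_sup_of_le_left le_sup_right)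
  · rw [prodSub_assoc]; exact (prodSub_mono le_rfl hBB).trans le_sup_right

lemma mul_mem_idealClosure {D B : Submodule F A} (hB : IsSubalg B) {b x : A} (hb : b ∈ B)
    (hx : x ∈ idealClosure D B) : b * x ∈ idealClosure D B ∧ x * b ∈ idealClosure D B :=
  ⟨prodSub_idealClosure_le hB (mem_prodSub hb hx), idealClosure_prodSub_le hB (mem_prodSub hx hb)⟩

end ScalarTower

end

namespace IsLocalSystem

variable {F A Γ : Type*} [Field F] [NonUnitalRing A] [Module F A] {S : Γ → Submodule F A}

lemma directed_idealClosure (hS : IsLocalSystem S) (D : Submodule F A) :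
    Directed (· ≤ ·) fun β => idealClosure D (S β) :=
  fun β γ => (hS.2.2.2 β γ).imp fun _ h => ⟨idealClosure_mono h.1, idealClosure_mono h.2⟩

variable [IsScalarTower F A A] [SMulCommClass F A A]

lemma isIdealIn_iSup_idealClosure (hS : IsLocalSystem S) (D : Submodule F A) :
    IsIdealIn (⨆ β, idealClosure D (S β)) ⊤ := by
  have : Nonempty Γ := (hS.2.2.1 0).nonempty
  refine ⟨le_top, fun b _ x hx => ?_⟩
  obtain ⟨β, hxβ⟩ := (mem_iSup_of_directed _ (hS.directed_idealClosure D)).mp hx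
  obtain ⟨γ, hbγ⟩ := hS.2.2.1 b
  obtain ⟨δ, hβδ, hγδ⟩ := hS.2.2.2 β γ
  obtain ⟨hbx, hxb⟩ := mul_mem_idealClosure (hS.1 δ) (hγδ hbγ) (idealClosure_mono hβδ hxβ)
  exact ⟨mem_iSup_of_mem δ hbx, mem_iSup_of_mem δ hxb⟩

lemma exists_radical_inf_eventually_eq (hS : IsLocalSystem S) (α : Γ) :
    ∃ β₀ D, ∀ β, S β₀ ≤ S β → ∀ R, IsRadicalOf R (S β) → R ⊓ S α = D := by
  classical
  have := hS.2.1 α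
  have hex : ∃ d, ∃ β R, S α ≤ S β ∧ IsRadicalOf R (S β) ∧ finrank F ↥(R ⊓ S α) = d :=
    let ⟨R, hR⟩ := exists_isRadicalOf (hS.1 α)
    ⟨_, α, R, le_rfl, hR, rfl⟩
  obtain ⟨β₀, R₀, hαβ₀, hR₀, hrank⟩ := Nat.find_spec hex
  refine ⟨β₀, R₀ ⊓ S α, fun β hβ R hR => ?_⟩
  have : FiniteDimensional F ↥(R₀ ⊓ S α) := finiteDimensional_of_le inf_le_right
  have hle : R ⊓ S α ≤ R₀ ⊓ S α := fun x hx =>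
    ⟨hR.inf_le hR₀ (hS.1 β₀) hβ ⟨hx.1, hαβ₀ hx.2⟩, hx.2⟩
  exact eq_of_le_of_finrank_le hle
    (hrank ▸ Nat.find_min' hex ⟨β, R, hαβ₀.trans hβ, hR, rfl⟩)

lemma eq_bot_of_radical_inf_eventually_eq (hsimple : IsSimpleAlg F A) (hS : IsLocalSystem S)
    {α β₀ : Γ} {D : Submodule F A} (hα : prodSub (S α) (S α) = S α)
    (hD : ∀ β, S β₀ ≤ S β → ∀ R, IsRadicalOf R (S β) → R ⊓ S α = D) : D = ⊥ := by
  rcases hsimple.2 _ (hS.isIdealIn_iSup_idealClosure D) with hK | hK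
  · exact le_bot_iff.mp (hK ▸ (le_idealClosure D (S β₀)).trans
      (le_iSup (fun β => idealClosure D (S β)) β₀))
  · have : Nonempty Γ := ⟨β₀⟩
    obtain ⟨β, hβ⟩ := ((fg_iff_finiteDimensional _).mpr (hS.2.1 α)).exists_le_of_le_iSup
      (hS.directed_idealClosure D) (hK ▸ le_top)
    obtain ⟨β₁, hββ₁, hβ₀β₁⟩ := hS.2.2.2 β β₀
    have := hS.2.1 β₁
    obtain ⟨R, hR⟩ := exists_isRadicalOf (hS.1 β₁)
    obtain ⟨n, hn⟩ := hR.2.1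
    have hDR : D ≤ R := hD β₁ hβ₀β₁ R hR ▸ inf_le_left
    have hαR : S α ≤ R := hβ.trans ((idealClosure_mono hββ₁).trans (idealClosure_le hR.1 hDR))
    rw [← hD β₁ hβ₀β₁ R hR, eq_bot_of_perfect_of_le_nilpotent hα hαR hn, inf_bot_eq]

end IsLocalSystem

theorem perfect_system_eventually_trivial_radical_intersection_general {F A : Type*} [Field F] [NonUnitalRing A] [Module F A]
    [IsScalarTower F A A] [SMulCommClass F A A]
    (hsimple : IsSimpleAlg F A)
    {Γ : Type*} (S : Γ → Submodule F A) (hS : IsLocalSystem S)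
    (hperf : ∀ α, prodSub (S α) (S α) = S α) :
    ∀ α, ∃ α', ∀ β, S α' ≤ S β → ∀ R, IsRadicalOf R (S β) → R ⊓ S α = ⊥ := by
  intro α
  obtain ⟨β₀, D, hD⟩ := hS.exists_radical_inf_eventually_eq α
  exact ⟨β₀, fun β hβ R hR =>
    (hD β hβ R hR).trans (hS.eq_bot_of_radical_inf_eventually_eq hsimple (hperf α) hD)⟩

theorem perfect_system_eventually_trivial_radical_intersection {F A : Type*} [Field F] [IsAlgClosed F] [NonUnitalRing A] [Module F A]
    [IsScalarTower F A A] [SMulCommClass F A A]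
    (hsimple : IsSimpleAlg F A) (hlf : IsLocallyFinite F A)
    {Γ : Type*} (S : Γ → Submodule F A) (hS : IsLocalSystem S)
    (hperf : ∀ α, prodSub (S α) (S α) = S α) :
    ∀ α, ∃ α', ∀ β, S α' ≤ S β → ∀ R, IsRadicalOf R (S β) → R ⊓ S α = ⊥ :=
  perfect_system_eventually_trivial_radical_intersection_general hsimple S hS hperf
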